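/- arXiv:1603.01860 — 6 statements merged into one kernel-verified Lean document; each statement's English description precedes it below -/
import Mathlib

section
/- The gradient of the ListNet loss with respect to the score vector has ℓ1 norm at most 2: for every s, y ∈ ℝ^m, ‖∇_s φ_LN(s,y)‖_1 ≤ 2. Consequently φ_LN(·,y) is 2-Lipschitz with respect to the ℓ∞ norm. -/
/-!
Since `∑ⱼ P_j(y) = 1`, the loss is `φ_LN(s, y) = log ∑ᵢ exp sᵢ - ⟨P(y), s⟩`. The gradient of the
log-sum-exp is the softmax `P(s)`, so `∇ₛ φ_LN = P(s) - P(y)` is a difference of two probability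
vectors and has `ℓ¹` norm at most `2`. As `ℓ¹` is dual to `ℓ∞`, the mean value inequality makes
`φ_LN(·, y)` `2`-Lipschitz for the sup norm.
-/

open scoped BigOperators

/-- The softmax probability `P_j(v) = exp(v_j) / ∑_i exp(v_i)`. -/
noncomputable def softmaxP {m : ℕ} (j : Fin m) (v : Fin m → ℝ) : ℝ :=
  Real.exp (v j) / ∑ i, Real.exp (v i)

/-- The ListNet loss `φ_LN(s,y) = -∑_j P_j(y) log P_j(s)`. -/
noncomputable def listNet {m : ℕ} (s y : Fin m → ℝ) : ℝ :=
  -∑ j, softmaxP j y * Real.log (softmaxP j s)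

open Finset ContinuousLinearMap

section SupNorm

variable {ι : Type*} [Fintype ι]

theorem norm_proj_le_one (i : ι) : ‖proj (R := ℝ) (φ := fun _ : ι => ℝ) i‖ ≤ 1 :=
  opNorm_le_bound _ zero_le_one fun x => by simpa using norm_le_pi_norm x i

theorem norm_sum_smul_proj_le (c : ι → ℝ) :
    ‖∑ j, c j • proj (R := ℝ) (φ := fun _ : ι => ℝ) j‖ ≤ ∑ j, |c j| :=
  (norm_sum_le _ _).trans <| sum_le_sum fun j _ => by
    rw [norm_smul, Real.norm_eq_abs]
    exact mul_le_of_le_one_right (abs_nonneg _) (norm_proj_le_one j)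

theorem norm_le_iSup_abs (x : ι → ℝ) : ‖x‖ ≤ ⨆ j, |x j| :=
  (pi_norm_le_iff_of_nonneg (Real.iSup_nonneg fun _ => abs_nonneg _)).2 fun j =>
    le_ciSup (f := fun i => |x i|) (Set.finite_range _).bddAbove j

theorem abs_sub_le_of_hasFDerivAt_sum_smul_proj {f : (ι → ℝ) → ℝ} {g : (ι → ℝ) → ι → ℝ}
    {C : ℝ} (hf : ∀ x, HasFDerivAt f (∑ j, g x j • proj (R := ℝ) (φ := fun _ : ι => ℝ) j) x)
    (hC : ∀ x, ∑ j, |g x j| ≤ C) (a b : ι → ℝ) :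
    |f a - f b| ≤ C * ⨆ j, |a j - b j| := by
  have hC₀ : 0 ≤ C := (sum_nonneg fun j _ => abs_nonneg (g a j)).trans (hC a)
  calc |f a - f b| ≤ C * ‖a - b‖ :=
        convex_univ.norm_image_sub_le_of_norm_hasFDerivWithin_le
          (fun x _ => (hf x).hasFDerivWithinAt)
          (fun x _ => (norm_sum_smul_proj_le _).trans (hC x)) (Set.mem_univ b) (Set.mem_univ a)
    _ ≤ C * ⨆ j, |a j - b j| := mul_le_mul_of_nonneg_left (norm_le_iSup_abs _) hC₀

end SupNorm

theorem sum_abs_sub_le_sum_add_sum {ι : Type*} (s : Finset ι) {p q : ι → ℝ}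
    (hp : ∀ i, 0 ≤ p i) (hq : ∀ i, 0 ≤ q i) :
    ∑ i ∈ s, |p i - q i| ≤ ∑ i ∈ s, p i + ∑ i ∈ s, q i := by
  rw [← sum_add_distrib]
  refine sum_le_sum fun i _ => (abs_sub _ _).trans_eq ?_
  rw [abs_of_nonneg (hp i), abs_of_nonneg (hq i)]

section Softmax

variable {m : ℕ}

theorem sum_exp_pos [Nonempty (Fin m)] (v : Fin m → ℝ) : 0 < ∑ i, Real.exp (v i) :=
  sum_pos (fun _ _ => Real.exp_pos _) univ_nonempty

theorem softmaxP_nonneg (j : Fin m) (v : Fin m → ℝ) : 0 ≤ softmaxP j v :=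
  div_nonneg (Real.exp_nonneg _) (sum_nonneg fun _ _ => Real.exp_nonneg _)

theorem sum_softmaxP_le_one (v : Fin m → ℝ) : ∑ j, softmaxP j v ≤ 1 := by
  simp only [softmaxP, ← sum_div]
  exact div_self_le_one _

theorem sum_softmaxP [Nonempty (Fin m)] (v : Fin m → ℝ) : ∑ j, softmaxP j v = 1 := by
  simp only [softmaxP, ← sum_div, div_self (sum_exp_pos v).ne']

theorem sum_abs_softmaxP_sub_le_two (s y : Fin m → ℝ) :
    ∑ j, |softmaxP j s - softmaxP j y| ≤ 2 :=
  calc ∑ j, |softmaxP j s - softmaxP j y| ≤ ∑ j, softmaxP j s + ∑ j, softmaxP j y :=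
        sum_abs_sub_le_sum_add_sum _ (softmaxP_nonneg · s) (softmaxP_nonneg · y)
    _ ≤ 2 := by linarith [sum_softmaxP_le_one s, sum_softmaxP_le_one y]

theorem log_softmaxP [Nonempty (Fin m)] (j : Fin m) (v : Fin m → ℝ) :
    Real.log (softmaxP j v) = v j - Real.log (∑ i, Real.exp (v i)) := by
  rw [softmaxP, Real.log_div (Real.exp_ne_zero _) (sum_exp_pos v).ne', Real.log_exp]

theorem listNet_eq_log_sum_exp_sub [Nonempty (Fin m)] (s y : Fin m → ℝ) :
    listNet s y = Real.log (∑ i, Real.exp (s i)) - ∑ j, softmaxP j y * s j := by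
  simp only [listNet, log_softmaxP, mul_sub, sum_sub_distrib, ← sum_mul, sum_softmaxP]
  ring

theorem hasFDerivAt_log_sum_exp [Nonempty (Fin m)] (s : Fin m → ℝ) :
    HasFDerivAt (fun t : Fin m → ℝ => Real.log (∑ i, Real.exp (t i)))
      (∑ i, softmaxP i s • proj (R := ℝ) (φ := fun _ : Fin m => ℝ) i) s := by
  have hsum : HasFDerivAt (fun t : Fin m → ℝ => ∑ i, Real.exp (t i))
      (∑ i, Real.exp (s i) • proj (R := ℝ) (φ := fun _ : Fin m => ℝ) i) s :=
    HasFDerivAt.fun_sum fun i _ => (hasFDerivAt_apply i s).exp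
  refine (hsum.log (sum_exp_pos s).ne').congr_fderiv ?_
  simp only [smul_sum, smul_smul, softmaxP, div_eq_inv_mul]

theorem hasFDerivAt_listNet (y s : Fin m → ℝ) :
    HasFDerivAt (fun t => listNet t y)
      (∑ j, (softmaxP j s - softmaxP j y) • proj (R := ℝ) (φ := fun _ : Fin m => ℝ) j) s := by
  rcases isEmpty_or_nonempty (Fin m) with hm | hm
  · simpa using hasFDerivAt_of_subsingleton (𝕜 := ℝ) (fun t => listNet t y) s
  have hlin : HasFDerivAt (fun t : Fin m → ℝ => ∑ j, softmaxP j y * t j)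
      (∑ j, softmaxP j y • proj (R := ℝ) (φ := fun _ : Fin m => ℝ) j) s :=
    HasFDerivAt.fun_sum fun j _ =>
      (proj (R := ℝ) (φ := fun _ : Fin m => ℝ) j).hasFDerivAt.const_mul (softmaxP j y)
  simp only [listNet_eq_log_sum_exp_sub]
  refine ((hasFDerivAt_log_sum_exp s).fun_sub hlin).congr_fderiv ?_
  rw [← sum_sub_distrib]
  exact sum_congr rfl fun j _ => (sub_smul _ _ _).symm

end Softmax

/-- The gradient of the ListNet loss w.r.t. the score vector is
`(P_j(s) - P_j(y))_j`; it has ℓ1 norm at most 2, and consequently `φ_LN(·,y)`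
is 2-Lipschitz w.r.t. the ℓ∞ norm. -/
theorem listNet_grad_l1_le_two {m : ℕ} (y : Fin m → ℝ) :
    (∀ s : Fin m → ℝ,
      HasFDerivAt (fun t => listNet t y)
        (∑ j, (softmaxP j s - softmaxP j y) •
          (ContinuousLinearMap.proj (R := ℝ) (φ := fun _ : Fin m => ℝ) j)) s) ∧
    (∀ s : Fin m → ℝ, ∑ j, |softmaxP j s - softmaxP j y| ≤ 2) ∧
    (∀ s₁ s₂ : Fin m → ℝ,
      |listNet s₁ y - listNet s₂ y| ≤ 2 * ⨆ j, |s₁ j - s₂ j|) :=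
  ⟨hasFDerivAt_listNet y, (sum_abs_softmaxP_sub_le_two · y),
    abs_sub_le_of_hasFDerivAt_sum_smul_proj (hasFDerivAt_listNet y)
      (sum_abs_softmaxP_sub_le_two · y)⟩
end

section
/- For the Smoothed DCG@1 loss with smoothing parameter σ > 0, the gradient with respect to the score vector satisfies ‖∇_s φ_SD(s,y)‖_1 ≤ 2 D(1) G(Y_max)/σ for all s ∈ ℝ^m and all y with entries in {0,...,Y_max}, independent of m. -/
open scoped BigOperators

/-- The smoothed softmax with temperature σ: `P_i = exp(s_i/σ) / ∑_j exp(s_j/σ)`. -/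
noncomputable def smoothP {m : ℕ} (σ : ℝ) (s : Fin m → ℝ) (i : Fin m) : ℝ :=
  Real.exp (s i / σ) / ∑ j, Real.exp (s j / σ)

/-- The discount `D(1) = 1/log₂(1+1)`. -/
noncomputable def discount1 : ℝ := 1 / Real.logb 2 2

/-- The gain `G(k) = 2^k - 1`. -/
noncomputable def gain (k : ℕ) : ℝ := 2 ^ k - 1

/-- The Smoothed DCG@1 loss `φ_SD(s,y) = D(1) ∑_i G(y_i) exp(s_i/σ)/∑_j exp(s_j/σ)`. -/
noncomputable def sdcg {m : ℕ} (σ : ℝ) (s : Fin m → ℝ) (y : Fin m → ℕ) : ℝ :=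
  discount1 * ∑ i, gain (y i) * smoothP σ s i

/-- The k-th component of the gradient of Smoothed DCG@1 w.r.t. the score vector. -/
noncomputable def sdcgGrad {m : ℕ} (σ : ℝ) (s : Fin m → ℝ) (y : Fin m → ℕ) (k : Fin m) : ℝ :=
  discount1 * (1 / σ) *
    (gain (y k) * smoothP σ s k - smoothP σ s k * ∑ i, gain (y i) * smoothP σ s i)

/-!
Differentiating the softmax gives `∂ P_i = σ⁻¹ P_i (e_i - P)`, so the `k`-th partial derivative of
`φ_SD` is `D(1) σ⁻¹ P_k (G(y_k) - Ḡ)` with `Ḡ = ∑ G(y_i) P_i` the softmax mean of the gains.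
Both `G(y_k)` and `Ḡ` lie in `[0, G(Y_max)]`, so the `k`-th term is at most `D(1) σ⁻¹ G(Y_max) P_k`,
and the softmax weights sum to `1`. This even gives the bound `D(1) G(Y_max) / σ`.
-/

section

variable {m : ℕ}

local notation "π" j => ContinuousLinearMap.proj (R := ℝ) (φ := fun _ : Fin _ => ℝ) j

lemma gain_nonneg (k : ℕ) : 0 ≤ gain k :=
  sub_nonneg.2 (one_le_pow₀ one_le_two)

lemma gain_mono : Monotone gain := fun _ _ h =>
  sub_le_sub_right (pow_le_pow_right₀ one_le_two h) 1

lemma discount1_eq_one : discount1 = 1 := by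
  simp [discount1]

lemma sum_exp_div_pos [Nonempty (Fin m)] (σ : ℝ) (s : Fin m → ℝ) :
    0 < ∑ j, Real.exp (s j / σ) :=
  Finset.sum_pos (fun _ _ => Real.exp_pos _) Finset.univ_nonempty

lemma smoothP_nonneg (σ : ℝ) (s : Fin m → ℝ) (i : Fin m) : 0 ≤ smoothP σ s i :=
  div_nonneg (Real.exp_pos _).le (Finset.sum_nonneg fun _ _ => (Real.exp_pos _).le)

lemma sum_smoothP [Nonempty (Fin m)] (σ : ℝ) (s : Fin m → ℝ) :
    ∑ i, smoothP σ s i = 1 := by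
  simp only [smoothP, ← Finset.sum_div]
  exact div_self (sum_exp_div_pos σ s).ne'

lemma hasFDerivAt_exp_div (σ : ℝ) (s : Fin m → ℝ) (k : Fin m) :
    HasFDerivAt (fun t : Fin m → ℝ => Real.exp (t k / σ))
      ((Real.exp (s k / σ) * σ⁻¹) • π k) s := by
  have := (Real.hasDerivAt_exp (s k / σ)).comp_hasFDerivAt s
    (((π k).hasFDerivAt (x := s)).mul_const σ⁻¹)
  simpa [Function.comp_def, smul_smul, div_eq_mul_inv] using this

lemma hasFDerivAt_smoothP [Nonempty (Fin m)] (σ : ℝ) (s : Fin m → ℝ) (i : Fin m) :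
    HasFDerivAt (fun t => smoothP σ t i)
      ((σ⁻¹ * smoothP σ s i) • ((π i) - ∑ j, smoothP σ s j • π j)) s := by
  have hsum := HasFDerivAt.fun_sum (u := Finset.univ) fun j _ => hasFDerivAt_exp_div σ s j
  have hquot := (hasFDerivAt_exp_div σ s i).mul
    ((hasDerivAt_inv (sum_exp_div_pos σ s).ne').comp_hasFDerivAt s hsum)
  have hf : (fun t => smoothP σ t i) =
      fun t => Real.exp (t i / σ) * (∑ j, Real.exp (t j / σ))⁻¹ :=
    funext fun _ => div_eq_mul_inv _ _
  rw [hf]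
  refine hquot.congr_fderiv ?_
  ext v
  have hmean : ∑ j, smoothP σ s j * v j =
      (∑ j, Real.exp (s j / σ) * v j) / ∑ j, Real.exp (s j / σ) := by
    simp only [smoothP, Finset.sum_div, div_mul_eq_mul_div]
  have hscale : ∑ j, Real.exp (s j / σ) * σ⁻¹ * v j = σ⁻¹ * ∑ j, Real.exp (s j / σ) * v j := by
    rw [Finset.mul_sum]
    exact Finset.sum_congr rfl fun j _ => by ring
  simp only [add_apply, smul_apply, sub_apply, sum_apply, ContinuousLinearMap.proj_apply,
    smul_eq_mul, Function.comp_apply, hmean, hscale]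
  simp only [smoothP]
  field_simp
  ring

lemma hasFDerivAt_sdcg (σ : ℝ) (s : Fin m → ℝ) (y : Fin m → ℕ) :
    HasFDerivAt (fun t => sdcg σ t y) (∑ j, sdcgGrad σ s y j • π j) s := by
  rcases isEmpty_or_nonempty (Fin m) with hm | hm
  · simpa using hasFDerivAt_of_subsingleton (𝕜 := ℝ) (fun t => sdcg σ t y) s
  have h := (HasFDerivAt.fun_sum (u := Finset.univ) fun i _ =>
    (hasFDerivAt_smoothP σ s i).const_mul (gain (y i))).const_mul discount1
  refine h.congr_fderiv ?_
  ext v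
  simp only [smul_apply, sub_apply, sum_apply, ContinuousLinearMap.proj_apply, smul_eq_mul,
    sdcgGrad]
  simp only [mul_sub, sub_mul, Finset.sum_sub_distrib, Finset.mul_sum, Finset.sum_mul]
  congr 1
  · exact Finset.sum_congr rfl fun i _ => by ring
  · rw [Finset.sum_comm]
    exact Finset.sum_congr rfl fun i _ => Finset.sum_congr rfl fun j _ => by ring

lemma sum_abs_mul_sub_sum_mul_le {ι : Type*} [Fintype ι] {p g : ι → ℝ} {M : ℝ}
    (hp : ∀ i, 0 ≤ p i) (hp1 : ∑ i, p i = 1) (hg0 : ∀ i, 0 ≤ g i) (hgM : ∀ i, g i ≤ M) :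
    ∑ k, |p k * (g k - ∑ i, g i * p i)| ≤ M := by
  set mean := ∑ i, g i * p i
  have hmean0 : 0 ≤ mean := Finset.sum_nonneg fun i _ => mul_nonneg (hg0 i) (hp i)
  have hmeanM : mean ≤ M := calc
    mean ≤ ∑ i, M * p i := Finset.sum_le_sum fun i _ => mul_le_mul_of_nonneg_right (hgM i) (hp i)
    _ = M := by rw [← Finset.mul_sum, hp1, mul_one]
  calc ∑ k, |p k * (g k - mean)| = ∑ k, p k * |g k - mean| := by
        simp only [abs_mul, abs_of_nonneg (hp _)]
    _ ≤ ∑ k, p k * M := Finset.sum_le_sum fun k _ => mul_le_mul_of_nonneg_left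
        (abs_sub_le_of_nonneg_of_le (hg0 k) (hgM k) hmean0 hmeanM) (hp k)
    _ = M := by rw [← Finset.sum_mul, hp1, one_mul]

lemma sum_abs_sdcgGrad_le {σ : ℝ} (hσ : 0 < σ) (s : Fin m → ℝ) {Ymax : ℕ}
    {y : Fin m → ℕ} (hy : ∀ i, y i ≤ Ymax) :
    ∑ k, |sdcgGrad σ s y k| ≤ gain Ymax / σ := by
  rcases isEmpty_or_nonempty (Fin m) with hm | hm
  · simpa using div_nonneg (gain_nonneg Ymax) hσ.le
  have hgrad : ∀ k, sdcgGrad σ s y k =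
      σ⁻¹ * (smoothP σ s k * (gain (y k) - ∑ i, gain (y i) * smoothP σ s i)) := fun k => by
    rw [sdcgGrad, discount1_eq_one]
    ring
  calc ∑ k, |sdcgGrad σ s y k|
      = σ⁻¹ * ∑ k, |smoothP σ s k * (gain (y k) - ∑ i, gain (y i) * smoothP σ s i)| := by
        rw [Finset.mul_sum]
        exact Finset.sum_congr rfl fun k _ => by rw [hgrad, abs_mul, abs_of_pos (inv_pos.2 hσ)]
    _ ≤ σ⁻¹ * gain Ymax := by
        gcongr
        exact sum_abs_mul_sub_sum_mul_le (smoothP_nonneg σ s) (sum_smoothP σ s)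
          (fun _ => gain_nonneg _) (fun i => gain_mono (hy i))
    _ = gain Ymax / σ := inv_mul_eq_div _ _

end

/-- The gradient of Smoothed DCG@1 w.r.t. the score vector has ℓ1 norm at most
`2 D(1) G(Y_max) / σ`, independently of `m`. -/
theorem sdcg_grad_l1_bound {m : ℕ} (σ : ℝ) (hσ : 0 < σ) (s : Fin m → ℝ)
    (Ymax : ℕ) (y : Fin m → ℕ) (hy : ∀ i, y i ≤ Ymax) :
    HasFDerivAt (fun t => sdcg σ t y)
      (∑ j, sdcgGrad σ s y j •
        (ContinuousLinearMap.proj (R := ℝ) (φ := fun _ : Fin m => ℝ) j)) s ∧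
    ∑ k, |sdcgGrad σ s y k| ≤ 2 * discount1 * gain Ymax / σ := by
  refine ⟨hasFDerivAt_sdcg σ s y, (sum_abs_sdcgGrad_le hσ s hy).trans ?_⟩
  rw [discount1_eq_one, mul_one, mul_div_assoc]
  exact le_mul_of_one_le_left (div_nonneg (gain_nonneg Ymax) hσ.le) one_le_two
end

section
/- A linear map f: ℝ^{m×d} → ℝ^m (with m ≥ 2) is permutation equivariant — i.e., f(P_π X) = P_π f(X) for every permutation matrix P_π and every X — if and only if there exist vectors w, v ∈ ℝ^d such that f(X) = Xw + (1^T X v)·1, where 1 is the all-ones vector in ℝ^m. In particular, the space of permutation equivariant linear maps from ℝ^{m×d} to ℝ^m has dimension 2d. -/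
open scoped BigOperators
open Matrix

/-- A linear map `f : ℝ^{m×d} → ℝ^m` (with `m ≥ 2`) is permutation equivariant,
i.e. `f(P_π X) = P_π f(X)` for all permutations `π` and all `X`, if and only if
there exist `w, v ∈ ℝ^d` with `f(X) = Xw + (1ᵀXv)·1`. -/
theorem perm_equivariant_linear_iff {m d : ℕ} (hm : 2 ≤ m)
    (f : Matrix (Fin m) (Fin d) ℝ →ₗ[ℝ] (Fin m → ℝ)) :
    (∀ (π : Equiv.Perm (Fin m)) (X : Matrix (Fin m) (Fin d) ℝ),
        f (X.submatrix π id) = fun i => f X (π i))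
    ↔ ∃ w v : Fin d → ℝ, ∀ X : Matrix (Fin m) (Fin d) ℝ,
        f X = fun i => X.mulVec w i + ∑ k, X.mulVec v k := by
  constructor
  · intro h
    set c : Fin m → Fin m → Fin d → ℝ :=
      fun i j k => f (Matrix.single j k 1) i with hc
    have key : ∀ (π : Equiv.Perm (Fin m)) (i j : Fin m) (k : Fin d),
        c (π i) (π j) k = c i j k := by
      intro π i j k
      have h2 : (Matrix.single (π j) k (1:ℝ)).submatrix π id
          = Matrix.single j k 1 := by
        ext a b
        simp [Matrix.single, Matrix.submatrix_apply, π.injective.eq_iff]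
      have h1 := h π (Matrix.single (π j) k 1)
      rw [h2] at h1
      exact (congrFun h1 i).symm
    have h01 : (0 : ℕ) < m := by omega
    have h11 : (1 : ℕ) < m := by omega
    set i0 : Fin m := ⟨0, h01⟩
    set i1 : Fin m := ⟨1, h11⟩
    have hne : i0 ≠ i1 := by simp [i0, i1, Fin.ext_iff]
    have hdiag : ∀ (i : Fin m) (k : Fin d), c i i k = c i0 i0 k := by
      intro i k
      have := key (Equiv.swap i0 i) i0 i0 k
      simpa using this
    have hoff : ∀ (i j : Fin m), i ≠ j → ∀ k : Fin d, c i j k = c i0 i1 k := by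
      intro i j hij k
      set t : Fin m := Equiv.swap i0 i i1
      have hti : t ≠ i := by
        intro hcontra
        apply hne
        have heq : Equiv.swap i0 i i1 = Equiv.swap i0 i i0 := by
          rw [Equiv.swap_apply_left]; exact hcontra
        exact ((Equiv.swap i0 i).injective heq).symm
      set π : Equiv.Perm (Fin m) := (Equiv.swap t j) * (Equiv.swap i0 i)
      have hπ0 : π i0 = i := by
        simp [π, Equiv.swap_apply_left]
        exact Equiv.swap_apply_of_ne_of_ne hti.symm hij
      have hπ1 : π i1 = j := by
        simp [π, t, Equiv.swap_apply_left]
      have := key π i0 i1 k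
      rw [hπ0, hπ1] at this
      exact this
    refine ⟨fun k => c i0 i0 k - c i0 i1 k, fun k => c i0 i1 k, ?_⟩
    intro X
    funext i
    have hX : X = ∑ j : Fin m, ∑ k : Fin d, (X j k) • Matrix.single j k (1:ℝ) := by
      conv_lhs => rw [Matrix.matrix_eq_sum_single X]
      congr 1; funext j; congr 1; funext k
      rw [Matrix.smul_single, smul_eq_mul, mul_one]
    have hfX : f X i = ∑ j : Fin m, ∑ k : Fin d, X j k * c i j k := by
      conv_lhs => rw [hX]
      simp only [map_sum, LinearMap.map_smul, Finset.sum_apply, Pi.smul_apply,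
        smul_eq_mul, hc]
    rw [hfX]
    have hval : ∀ (j : Fin m) (k : Fin d),
        c i j k = c i0 i1 k + (if j = i then c i0 i0 k - c i0 i1 k else 0) := by
      intro j k
      by_cases hji : j = i
      · subst hji
        simp [hdiag j k]
      · rw [hoff i j (fun hcontra => hji hcontra.symm) k]
        simp [hji]
    simp only [hval]
    have : ∀ j : Fin m, ∑ k : Fin d,
        X j k * (c i0 i1 k + (if j = i then c i0 i0 k - c i0 i1 k else 0))
        = (∑ k : Fin d, X j k * c i0 i1 k)
          + (if j = i then ∑ k : Fin d, X j k * (c i0 i0 k - c i0 i1 k) else 0) := by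
      intro j
      by_cases hji : j = i
      · subst hji
        simp only [if_pos rfl, if_true]
        rw [← Finset.sum_add_distrib]
        exact Finset.sum_congr rfl fun k _ => by ring
      · simp [hji]
    simp only [this]
    rw [Finset.sum_add_distrib, Finset.sum_ite_eq' Finset.univ i
      (fun j => ∑ k : Fin d, X j k * (c i0 i0 k - c i0 i1 k))]
    simp [Matrix.mulVec, dotProduct, add_comm]
  · rintro ⟨w, v, hwv⟩ π X
    funext i
    rw [hwv, hwv]
    have h1 : (X.submatrix π id).mulVec w i = X.mulVec w (π i) := by
      simp [Matrix.mulVec, dotProduct, Matrix.submatrix_apply]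
    have h2 : ∑ k, (X.submatrix π id).mulVec v k = ∑ k, X.mulVec v k := by
      have : ∀ k, (X.submatrix π id).mulVec v k = X.mulVec v (π k) := by
        intro k; simp [Matrix.mulVec, dotProduct, Matrix.submatrix_apply]
      simp only [this]
      exact Equiv.sum_comp π (fun k => X.mulVec v k)
    dsimp only
    rw [h1, h2]
end

section
/- Let f: ℝ → ℝ be a nonnegative differentiable function whose derivative is H-Lipschitz (H-smooth). Then for all t, r ∈ ℝ, (f(t) - f(r))² ≤ 6H (f(t) + f(r)) (t - r)². -/
/-! The Taylor remainder of a function with `H`-Lipschitz derivative is at most `H (y - x)²`.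
For a nonnegative function this forces `f'(x)² ≤ 4 H f(x)` (a quadratic in the step that stays
nonnegative has nonpositive discriminant), and the two bounds together make `√f` a
`√H`-Lipschitz function. The claim follows from
`(a - b)² = (√a - √b)² (√a + √b)² ≤ 2 (√a - √b)² (a + b)`, even with `2H` in place of `6H`. -/

open scoped NNReal

section SmoothNonneg

variable {f : ℝ → ℝ} {K : ℝ≥0}

theorem abs_sub_sub_deriv_mul_le_of_lipschitzWith_deriv (hf : Differentiable ℝ f)
    (hK : LipschitzWith K (deriv f)) (x y : ℝ) :
    |f y - f x - deriv f x * (y - x)| ≤ K * (y - x) ^ 2 := by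
  let g : ℝ → ℝ := fun z ↦ f z - deriv f x * z
  have hg : ∀ z, HasDerivAt g (deriv f z - deriv f x) z := fun z ↦
    ((hf z).hasDerivAt.sub ((hasDerivAt_id' z).const_mul (deriv f x))).congr_deriv (by ring)
  have bound : ∀ z ∈ Set.uIcc x y, ‖deriv g z‖ ≤ K * |y - x| := fun z hz ↦ by
    rw [(hg z).deriv, Real.norm_eq_abs, ← Real.dist_eq]
    calc dist (deriv f z) (deriv f x) ≤ K * dist z x := hK.dist_le_mul z x
      _ ≤ K * |y - x| := by
        gcongr
        exact Set.abs_sub_left_of_mem_uIcc hz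
  have hmvt := Convex.norm_image_sub_le_of_norm_deriv_le (fun z _ ↦ (hg z).differentiableAt)
    bound (convex_uIcc x y) Set.left_mem_uIcc Set.right_mem_uIcc
  simp only [g, Real.norm_eq_abs] at hmvt
  calc |f y - f x - deriv f x * (y - x)| = |f y - deriv f x * y - (f x - deriv f x * x)| := by
        ring_nf
    _ ≤ K * |y - x| * |y - x| := hmvt
    _ = K * (y - x) ^ 2 := by rw [mul_assoc, ← sq, sq_abs]

theorem sq_deriv_le_of_nonneg (hf : Differentiable ℝ f) (hK : LipschitzWith K (deriv f))
    (hpos : ∀ x, 0 ≤ f x) (x : ℝ) : deriv f x ^ 2 ≤ 4 * K * f x := by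
  have hquad : ∀ s, 0 ≤ K * (s * s) + deriv f x * s + f x := fun s ↦ by
    have htaylor :=
      (le_abs_self _).trans (abs_sub_sub_deriv_mul_le_of_lipschitzWith_deriv hf hK x (x + s))
    rw [add_sub_cancel_left] at htaylor
    nlinarith [hpos (x + s)]
  have hdisc := discrim_le_zero hquad
  rw [discrim] at hdisc
  linarith

theorem lipschitzWith_sqrt_of_nonneg (hf : Differentiable ℝ f) (hK : LipschitzWith K (deriv f))
    (hpos : ∀ x, 0 ≤ f x) : LipschitzWith (NNReal.sqrt K) (fun x ↦ √(f x)) := by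
  refine LipschitzWith.of_le_add_mul _ fun t r ↦ ?_
  have hderiv : |deriv f r| ≤ 2 * √K * √(f r) := by
    refine abs_le_of_sq_le_sq ?_ (by positivity)
    rw [mul_pow, mul_pow, Real.sq_sqrt K.coe_nonneg, Real.sq_sqrt (hpos r)]
    linarith [sq_deriv_le_of_nonneg hf hK hpos r]
  have htaylor := (le_abs_self _).trans (abs_sub_sub_deriv_mul_le_of_lipschitzWith_deriv hf hK r t)
  have hlin := (le_abs_self _).trans_eq (abs_mul (deriv f r) (t - r))
  rw [Real.coe_sqrt, Real.dist_eq, Real.sqrt_le_left (by positivity)]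
  calc f t ≤ f r + |deriv f r| * |t - r| + K * (t - r) ^ 2 := by linarith
    _ ≤ f r + 2 * √K * √(f r) * |t - r| + K * (t - r) ^ 2 := by gcongr
    _ = (√(f r) + √K * |t - r|) ^ 2 := by
        rw [add_sq, mul_pow, Real.sq_sqrt (hpos r), Real.sq_sqrt K.coe_nonneg, sq_abs]; ring

end SmoothNonneg

theorem sq_sub_le_two_mul_sq_sqrt_sub_mul_add {a b : ℝ} (ha : 0 ≤ a) (hb : 0 ≤ b) :
    (a - b) ^ 2 ≤ 2 * (√a - √b) ^ 2 * (a + b) := by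
  have hsum : (√a + √b) ^ 2 ≤ 2 * (a + b) := by
    nlinarith [sq_nonneg (√a - √b), Real.sq_sqrt ha, Real.sq_sqrt hb]
  calc (a - b) ^ 2 = (√a ^ 2 - √b ^ 2) ^ 2 := by rw [Real.sq_sqrt ha, Real.sq_sqrt hb]
    _ = (√a - √b) ^ 2 * (√a + √b) ^ 2 := by ring
    _ ≤ (√a - √b) ^ 2 * (2 * (a + b)) := by gcongr
    _ = 2 * (√a - √b) ^ 2 * (a + b) := by ring

/-- Self-bounding property of smooth nonnegative scalar functions: if `f : ℝ → ℝ` is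
nonnegative and differentiable with `H`-Lipschitz derivative, then
`(f(t) - f(r))² ≤ 6H (f(t) + f(r)) (t - r)²`. -/
theorem smooth_nonneg_self_bounding (f : ℝ → ℝ) (H : ℝ)
    (hdiff : Differentiable ℝ f) (hpos : ∀ x, 0 ≤ f x)
    (hsmooth : ∀ t r : ℝ, |deriv f t - deriv f r| ≤ H * |t - r|) :
    ∀ t r : ℝ, (f t - f r) ^ 2 ≤ 6 * H * (f t + f r) * (t - r) ^ 2 := by
  have hH : 0 ≤ H := by simpa using (abs_nonneg _).trans (hsmooth 1 0)
  have hlip : LipschitzWith H.toNNReal (deriv f) :=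
    LipschitzWith.of_dist_le' fun x y ↦ by simpa only [Real.dist_eq] using hsmooth x y
  intro t r
  have hsqrt : (√(f t) - √(f r)) ^ 2 ≤ H * (t - r) ^ 2 := by
    have hdist := (lipschitzWith_sqrt_of_nonneg hdiff hlip hpos).dist_le_mul t r
    rw [Real.dist_eq, Real.dist_eq, Real.coe_sqrt, Real.coe_toNNReal H hH] at hdist
    calc (√(f t) - √(f r)) ^ 2 ≤ (√H * |t - r|) ^ 2 := by
          rw [← sq_abs]; gcongr
      _ = H * (t - r) ^ 2 := by rw [mul_pow, Real.sq_sqrt hH, sq_abs]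
  have hsum : 0 ≤ f t + f r := add_nonneg (hpos t) (hpos r)
  calc (f t - f r) ^ 2 ≤ 2 * (√(f t) - √(f r)) ^ 2 * (f t + f r) :=
        sq_sub_le_two_mul_sq_sqrt_sub_mul_add (hpos t) (hpos r)
    _ ≤ 2 * (H * (t - r) ^ 2) * (f t + f r) := by gcongr
    _ ≤ 6 * H * (f t + f r) * (t - r) ^ 2 := by
        nlinarith [mul_nonneg (mul_nonneg hH hsum) (sq_nonneg (t - r))]
end

section
/- Let ‖·‖ be a norm on ℝ^m with dual norm ‖·‖_*, and let φ: ℝ^m → ℝ_+ be a nonnegative differentiable function whose gradient satisfies ‖∇φ(s₁) − ∇φ(s₂)‖_* ≤ H‖s₁ − s₂‖ for all s₁, s₂. Then for all s₁, s₂ ∈ ℝ^m: (φ(s₁) − φ(s₂))² ≤ 6H (φ(s₁) + φ(s₂)) ‖s₁ − s₂‖². -/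
/-- Descent lemma: if the derivative of `φ` is `H`-Lipschitz, then
`φ y ≤ φ x + (fderiv φ x) (y - x) + H/2 ‖y - x‖²`. -/
theorem descent_lemma_aux {E : Type*} [NormedAddCommGroup E]
    [NormedSpace ℝ E] (φ : E → ℝ) (H : ℝ)
    (hdiff : Differentiable ℝ φ)
    (hsmooth : ∀ s₁ s₂ : E, ‖fderiv ℝ φ s₁ - fderiv ℝ φ s₂‖ ≤ H * ‖s₁ - s₂‖)
    (hH : 0 ≤ H) (x y : E) :
    φ y ≤ φ x + fderiv ℝ φ x (y - x) + H / 2 * ‖y - x‖ ^ 2 := by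
  set d := y - x with hd
  set f' : ℝ → ℝ := fun t => fderiv ℝ φ (x + t • d) d with hf'
  have hcont : Continuous fun z : E => fderiv ℝ φ z := by
    refine (LipschitzWith.of_dist_le_mul (K := H.toNNReal) fun a b => ?_).continuous
    rw [dist_eq_norm, dist_eq_norm, Real.coe_toNNReal _ hH]
    exact hsmooth a b
  have hline : Continuous fun t : ℝ => x + t • d := by continuity
  have hfc : Continuous f' := (hcont.comp hline).clm_apply continuous_const
  have hderiv : ∀ t : ℝ, HasDerivAt (fun t : ℝ => φ (x + t • d)) (f' t) t := by
    intro t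
    have h1 : HasDerivAt (fun t : ℝ => x + t • d) d t := by
      simpa using ((hasDerivAt_id t).smul_const d).const_add x
    exact (hdiff (x + t • d)).hasFDerivAt.comp_hasDerivAt t h1
  have hint : (∫ t in (0:ℝ)..1, f' t) = φ (x + (1:ℝ) • d) - φ (x + (0:ℝ) • d) :=
    intervalIntegral.integral_eq_sub_of_hasDerivAt (fun t _ => hderiv t)
      (hfc.intervalIntegrable 0 1)
  have hxy : x + (1:ℝ) • d = y := by simp [hd]
  have hx0 : x + (0:ℝ) • d = x := by simp
  rw [hxy, hx0] at hint
  have hmono : (∫ t in (0:ℝ)..1, f' t) ≤ ∫ t in (0:ℝ)..1, (f' 0 + H * ‖d‖ ^ 2 * t) := by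
    refine intervalIntegral.integral_mono_on zero_le_one (hfc.intervalIntegrable 0 1)
      ((continuous_const.add (continuous_const.mul continuous_id)).intervalIntegrable 0 1) ?_
    intro t ht
    have hb : ‖(fderiv ℝ φ (x + t • d) - fderiv ℝ φ (x + (0:ℝ) • d)) d‖
        ≤ (H * ‖(x + t • d) - (x + (0:ℝ) • d)‖) * ‖d‖ :=
      ContinuousLinearMap.le_of_opNorm_le _ (hsmooth _ _) d
    have hsimp : ‖(x + t • d) - (x + (0:ℝ) • d)‖ = |t| * ‖d‖ := by
      simp [norm_smul]
    rw [hsimp, ContinuousLinearMap.sub_apply, Real.norm_eq_abs] at hb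
    have habs : |t| = t := abs_of_nonneg ht.1
    rw [habs] at hb
    have := (le_abs_self (f' t - f' 0)).trans hb
    have : f' t - f' 0 ≤ H * ‖d‖ ^ 2 * t := by nlinarith [this]
    linarith
  have hval : (∫ t in (0:ℝ)..1, (f' 0 + H * ‖d‖ ^ 2 * t)) = f' 0 + H * ‖d‖ ^ 2 / 2 := by
    rw [intervalIntegral.integral_add (intervalIntegrable_const)
      ((intervalIntegral.intervalIntegrable_id).const_mul _),
      intervalIntegral.integral_const, intervalIntegral.integral_const_mul, integral_id]
    rw [smul_eq_mul]; ring
  have hf0 : f' 0 = fderiv ℝ φ x d := by simp [hf']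
  rw [hint] at hmono
  rw [hval, hf0] at hmono
  linarith

set_option maxHeartbeats 1000000 in
/-- Vector-valued self-bounding smoothness lemma: if `φ` is nonnegative and differentiable
on a normed space (such as ℝ^m with an arbitrary norm) and its derivative (whose operator
norm is the dual norm of the gradient) is `H`-Lipschitz, then
`(φ(s₁) - φ(s₂))² ≤ 6H (φ(s₁) + φ(s₂)) ‖s₁ - s₂‖²`. -/
theorem smooth_nonneg_self_bounding_vector {E : Type*} [NormedAddCommGroup E]
    [NormedSpace ℝ E] (φ : E → ℝ) (H : ℝ)
    (hdiff : Differentiable ℝ φ) (hpos : ∀ s, 0 ≤ φ s)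
    (hsmooth : ∀ s₁ s₂ : E, ‖fderiv ℝ φ s₁ - fderiv ℝ φ s₂‖ ≤ H * ‖s₁ - s₂‖) :
    ∀ s₁ s₂ : E, (φ s₁ - φ s₂) ^ 2 ≤ 6 * H * (φ s₁ + φ s₂) * ‖s₁ - s₂‖ ^ 2 := by
  intro s₁ s₂
  by_cases hss : s₁ = s₂
  · subst hss; simp
  have ha : 0 < ‖s₁ - s₂‖ := by rwa [norm_pos_iff, sub_ne_zero]
  have hH : 0 ≤ H := by
    have h := (norm_nonneg _).trans (hsmooth s₁ s₂)
    nlinarith [h, ha]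
  have descent := descent_lemma_aux φ H hdiff hsmooth hH
  -- gradient self-bound: ‖fderiv φ x‖² ≤ 2 H φ x
  have grad : ∀ x : E, ‖fderiv ℝ φ x‖ ^ 2 ≤ 2 * H * φ x := by
    intro x
    set G := ‖fderiv ℝ φ x‖ with hGdef
    have hG0 : 0 ≤ G := norm_nonneg _
    have hkey : ∀ t : ℝ, 0 ≤ t → t * G ≤ φ x + H * t ^ 2 / 2 := by
      intro t ht
      have hc : ∀ c : ℝ, c < G → t * c ≤ φ x + H * t ^ 2 / 2 := by
        intro c hcG
        obtain ⟨u, hu1, hu2⟩ := (fderiv ℝ φ x).exists_lt_apply_of_lt_opNorm hcG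
        rw [Real.norm_eq_abs] at hu2
        set v : E := if fderiv ℝ φ x u ≤ 0 then u else -u with hv
        have hvnorm : ‖v‖ ≤ 1 := by
          rw [hv]; split <;> simp [le_of_lt hu1]
        have hvval : fderiv ℝ φ x v = -|fderiv ℝ φ x u| := by
          rw [hv]; split
          · rw [abs_of_nonpos ‹_›]; ring
          · rw [map_neg, abs_of_pos (lt_of_not_ge ‹_›)]
        have hdes := descent x (x + t • v)
        have hx : x + t • v - x = t • v := by abel
        rw [hx] at hdes
        have happ : (fderiv ℝ φ x) (t • v) = t * fderiv ℝ φ x v := by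
          rw [map_smul]; rfl
        have hnorm : ‖t • v‖ ^ 2 ≤ t ^ 2 := by
          rw [norm_smul, Real.norm_eq_abs, abs_of_nonneg ht, mul_pow]
          have h2 : ‖v‖ ^ 2 ≤ 1 := by nlinarith [norm_nonneg v]
          nlinarith [sq_nonneg t]
        have h0 := hpos (x + t • v)
        rw [happ, hvval] at hdes
        nlinarith [mul_le_mul_of_nonneg_left hnorm (by linarith : (0:ℝ) ≤ H / 2),
          mul_le_mul_of_nonneg_left hu2.le ht]
      rcases eq_or_lt_of_le (le_refl (t * G)) with _ | _
      · by_contra hcon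
        push_neg at hcon
        rcases ht.eq_or_lt with rfl | htpos
        · simp at hcon; nlinarith [hpos x]
        · set c := ((φ x + H * t ^ 2 / 2) / t + G) / 2 with hcdef
          have hc1 : c < G := by
            have : (φ x + H * t ^ 2 / 2) / t < G := by
              rw [div_lt_iff₀ htpos]; nlinarith
            rw [hcdef]; linarith
          have := hc c hc1
          have hcc : (φ x + H * t ^ 2 / 2) / t < c := by
            have : (φ x + H * t ^ 2 / 2) / t < G := by
              rw [div_lt_iff₀ htpos]; nlinarith
            rw [hcdef]; linarith
          rw [div_lt_iff₀ htpos] at hcc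
          nlinarith
      · by_contra hcon
        push_neg at hcon
        nlinarith [hpos x]
    by_cases hH0 : H = 0
    · subst hH0
      have hGz : G = 0 := by
        by_contra hGz
        have hGpos : 0 < G := lt_of_le_of_ne hG0 (Ne.symm hGz)
        have := hkey ((φ x + 1) / G) (div_nonneg (by linarith [hpos x]) hG0)
        rw [div_mul_cancel₀ _ (ne_of_gt hGpos)] at this
        nlinarith
      rw [hGz]; nlinarith [hpos x]
    · have hHpos : 0 < H := lt_of_le_of_ne hH (Ne.symm hH0)
      have h := hkey (G / H) (by positivity)
      have e1 : G / H * G = G ^ 2 / H := by ring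
      have e2 : H * (G / H) ^ 2 / 2 = G ^ 2 / (2 * H) := by field_simp
      rw [e1, e2] at h
      have e3 : G ^ 2 / H = 2 * (G ^ 2 / (2 * H)) := by field_simp
      rw [e3] at h
      have : G ^ 2 / (2 * H) ≤ φ x := by linarith
      rw [div_le_iff₀ (by positivity)] at this
      linarith
  -- symmetric key step
  have key : ∀ u v : E, φ v ≤ φ u →
      (φ u - φ v) ^ 2 ≤ 6 * H * (φ u + φ v) * ‖u - v‖ ^ 2 := by
    intro u v huv
    have h1 := descent v u
    have hb := (fderiv ℝ φ v).le_opNorm (u - v)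
    rw [Real.norm_eq_abs] at hb
    have hg := grad v
    set a := ‖u - v‖ with hadef
    have ha0 : 0 ≤ a := norm_nonneg _
    have hδ : φ u - φ v ≤ ‖fderiv ℝ φ v‖ * a + H / 2 * a ^ 2 := by
      have := le_abs_self (fderiv ℝ φ v (u - v))
      linarith
    have hδ0 : 0 ≤ φ u - φ v := by linarith
    have hG0 : 0 ≤ ‖fderiv ℝ φ v‖ := norm_nonneg _
    have hS : 0 ≤ φ u + φ v := by linarith [hpos u, hpos v]
    rcases le_total (H * a ^ 2) (φ u + φ v) with hc | hc
    · nlinarith [mul_self_le_mul_self hδ0 hδ,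
        mul_le_mul_of_nonneg_right hg (sq_nonneg a),
        mul_le_mul_of_nonneg_right hc (mul_nonneg hH (sq_nonneg a)),
        sq_nonneg (‖fderiv ℝ φ v‖ * a - H / 2 * a ^ 2),
        hpos v, mul_nonneg (mul_nonneg hH (hpos v)) (sq_nonneg a)]
    · have hδS : φ u - φ v ≤ φ u + φ v := by linarith [hpos v]
      nlinarith [mul_self_le_mul_self hδ0 hδS,
        mul_le_mul_of_nonneg_left hc hS,
        mul_nonneg (mul_nonneg hH hS) (sq_nonneg a)]
  rcases le_total (φ s₂) (φ s₁) with h | h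
  · exact key s₁ s₂ h
  · have hk := key s₂ s₁ h
    calc (φ s₁ - φ s₂) ^ 2 = (φ s₂ - φ s₁) ^ 2 := by ring
      _ ≤ 6 * H * (φ s₂ + φ s₁) * ‖s₂ - s₁‖ ^ 2 := hk
      _ = 6 * H * (φ s₁ + φ s₂) * ‖s₁ - s₂‖ ^ 2 := by rw [norm_sub_rev s₂ s₁]; ring
end

section
/- Fix H > 0, W > 0, n ≥ 1 and L* ≥ 0. Let x = HW²/n and define η = W / (4HW + 2√(4H²W² + 2HL*n)), which satisfies 0 < 4ηH < 1. Then L*/(1 − 4ηH) + W²/(2η(1 − 4ηH)n) ≤ L* + 2√(2xL*) + 8x. -/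
/-!
In terms of `x = HW²/n` and `s = √(4x² + 2xL*)` the step size is `η = (W²/n)/(4x + 2s)`, so
`4ηH = 2x/(2x + s)` and `W²/(2ηn) = 2x + s`. Because `s² = 4x² + 2xL*`, the left-hand side then
equals `L* + 4x + 2s` exactly, and `s ≤ 2x + √(2xL*)` gives the bound.
-/

theorem Real.sqrt_sq_add_le {a b : ℝ} (ha : 0 ≤ a) (hb : 0 ≤ b) : √(a ^ 2 + b) ≤ a + √b := by
  rw [Real.sqrt_le_iff]
  refine ⟨by positivity, ?_⟩
  nlinarith [Real.sq_sqrt hb, Real.sqrt_nonneg b]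

theorem learning_rate_rescale {H W L n : ℝ} (hW : 0 < W) (hn : 0 < n) :
    W / (4 * H * W + 2 * √(4 * H ^ 2 * W ^ 2 + 2 * H * L * n)) =
      W ^ 2 / n /
        (4 * (H * W ^ 2 / n) + 2 * √(4 * (H * W ^ 2 / n) ^ 2 + 2 * (H * W ^ 2 / n) * L)) := by
  have hWn : 0 < W / n := div_pos hW hn
  have hsqrt : √(4 * H ^ 2 * W ^ 2 + 2 * H * L * n) =
      n / W * √(4 * (H * W ^ 2 / n) ^ 2 + 2 * (H * W ^ 2 / n) * L) := by
    rw [← Real.sqrt_sq (div_pos hn hW).le, ← Real.sqrt_mul (sq_nonneg _)]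
    congr 1
    field_simp
  rw [hsqrt, ← mul_div_mul_right W _ hWn.ne']
  congr 1
  · ring
  · field_simp

theorem add_div_one_sub_div_eq {x L s : ℝ} (hx : 0 ≤ x) (hs : 0 < s)
    (hsq : s ^ 2 = 4 * x ^ 2 + 2 * x * L) :
    (L + (2 * x + s)) / (1 - 2 * x / (2 * x + s)) = L + 4 * x + 2 * s := by
  have hpos : 0 < 2 * x + s := by positivity
  rw [one_sub_div hpos.ne', add_sub_cancel_left, div_div_eq_mul_div, div_eq_iff hs.ne']
  linear_combination -hsq

/-- Algebraic simplification behind the optimistic online-to-batch rate: with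
`x = HW²/n` and `η = W/(4HW + 2√(4H²W² + 2HL*n))` (which satisfies `0 < 4ηH < 1`),
`L*/(1−4ηH) + W²/(2η(1−4ηH)n) ≤ L* + 2√(2xL*) + 8x`. -/
theorem optimistic_rate_algebra (H W Lstar : ℝ) (n : ℕ)
    (hH : 0 < H) (hW : 0 < W) (hn : 1 ≤ n) (hL : 0 ≤ Lstar) :
    let x : ℝ := H * W ^ 2 / n
    let η : ℝ := W / (4 * H * W + 2 * Real.sqrt (4 * H ^ 2 * W ^ 2 + 2 * H * Lstar * n))
    0 < 4 * η * H ∧ 4 * η * H < 1 ∧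
      Lstar / (1 - 4 * η * H) + W ^ 2 / (2 * η * (1 - 4 * η * H) * n)
        ≤ Lstar + 2 * Real.sqrt (2 * x * Lstar) + 8 * x := by
  intro x η
  have hn : (0 : ℝ) < n := by exact_mod_cast hn
  have hx : 0 < x := by positivity
  set s := √(4 * x ^ 2 + 2 * x * Lstar)
  have hs : 0 < s := Real.sqrt_pos.2 (by positivity)
  have hη : η = W ^ 2 / n / (4 * x + 2 * s) := learning_rate_rescale hW hn
  have hηpos : 0 < η := by rw [hη]; positivity
  have hc : 4 * η * H = 2 * x / (2 * x + s) := by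
    rw [hη, show x = H * W ^ 2 / n from rfl]; field_simp; ring
  have hb : W ^ 2 / (2 * η * n) = 2 * x + s := by rw [hη]; field_simp; ring
  have hs_le : s ≤ 2 * x + √(2 * x * Lstar) := by
    have h := Real.sqrt_sq_add_le (by positivity : 0 ≤ 2 * x) (by positivity : 0 ≤ 2 * x * Lstar)
    rwa [mul_pow, show (2 : ℝ) ^ 2 = 4 by norm_num] at h
  refine ⟨by positivity, by rw [hc, div_lt_one (by positivity)]; linarith, ?_⟩
  calc Lstar / (1 - 4 * η * H) + W ^ 2 / (2 * η * (1 - 4 * η * H) * n)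
      = (Lstar + W ^ 2 / (2 * η * n)) / (1 - 4 * η * H) := by
        rw [add_div, div_div, mul_right_comm (2 * η)]
    _ = Lstar + 4 * x + 2 * s := by
      rw [hb, hc]; exact add_div_one_sub_div_eq hx.le hs (Real.sq_sqrt (by positivity))
    _ ≤ Lstar + 2 * √(2 * x * Lstar) + 8 * x := by linarith
end
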